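/- arXiv:2311.07035 — 3 statements merged into one kernel-verified Lean document; each statement's English description precedes it below -/
import Mathlib

section
/- Let Ω = [a,b] with a < b, f : Ω×Ω → ℝ continuous, ε > 0, and suppose d > 0 is such that |f(x,y) − f(x,z)| ≤ ε/(4(b−a)) whenever y,z ∈ Ω with |y−z| < d. Let K_ℓ(x,y) = (1/(ℓ√(2π))) exp(−(x−y)²/(2ℓ²)). If ℓ < min{ d/√(2 log(8‖f‖_∞(b−a)/ε)), 5ε/(26‖f‖_∞) }, then |∫_Ω∫_Ω f(x,y) K_ℓ(x,y) dx dy − ∫_Ω f(x,x) dx| < ε. -/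
/-!
The kernel is `K_ℓ(x, y) = p_x(y)`, the Gaussian density with mean `x` and variance `ℓ²`. For
`x ∈ [a, b]`,
`∫_a^b f(x,y) p_x(y) dy - f(x,x) = ∫_a^b (f(x,y) - f(x,x)) p_x(y) dy - f(x,x) (1 - ∫_a^b p_x)`.
In the first integral the points within `d` of `x` contribute at most `ε / (4(b-a))`, the others
at most `2M` times the mass of `p_x` beyond distance `d`, which is at most `e^{-d²/2ℓ²}`. The mass
`1 - ∫_a^b p_x` lost outside `[a, b]` is at most `(e^{-(x-a)²/2ℓ²} + e^{-(b-x)²/2ℓ²}) / 2`.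
Both come from one-sided tail bounds: beyond `t ≥ μ` the density `p_μ` is dominated by
`e^{-(t-μ)²/2ℓ²} p_t`, and `p_t` has mass `1/2` on each side of `t`. As functions of `x` the edge
terms are multiples of Gaussian densities, so they contribute at most `M ℓ √(2π) / 2` after
integration over `[a, b]`. The two bounds on `ℓ` make the far term and the edge term each smaller
than `ε / 4`.
-/

open MeasureTheory Set Real NNReal ProbabilityTheory

theorem setIntegral_union_le {X : Type*} [MeasurableSpace X] {μ : Measure X} {f : X → ℝ}
    {s t : Set X} (hf : ∀ x, 0 ≤ f x) (hfs : IntegrableOn f s μ) (hft : IntegrableOn f t μ) :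
    ∫ x in s ∪ t, f x ∂μ ≤ (∫ x in s, f x ∂μ) + ∫ x in t, f x ∂μ := by
  rw [← integral_add_measure hfs hft]
  exact integral_mono_measure (Measure.restrict_union_le s t) (ae_of_all _ hf)
    (Integrable.add_measure hfs hft)

theorem integrableOn_setIntegral_of_continuousOn {F : ℝ → ℝ → ℝ} {s t : Set ℝ}
    (hs : IsCompact s) (ht : IsCompact t)
    (hF : ContinuousOn (fun p : ℝ × ℝ => F p.1 p.2) (s ×ˢ t)) :
    IntegrableOn (fun x => ∫ y in t, F x y) s := by
  have h := hF.integrableOn_compact (μ := volume) (hs.prod ht)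
  rw [IntegrableOn, Measure.volume_eq_prod, ← Measure.prod_restrict] at h
  exact h.integral_prod_left

namespace ProbabilityTheory

variable {v : ℝ≥0}

theorem continuous_uncurry_gaussianPDFReal (v : ℝ≥0) :
    Continuous fun p : ℝ × ℝ => gaussianPDFReal p.1 v p.2 := by
  simp only [gaussianPDFReal]
  fun_prop

theorem continuous_gaussianPDFReal (μ : ℝ) (v : ℝ≥0) : Continuous (gaussianPDFReal μ v) :=
  (continuous_uncurry_gaussianPDFReal v).comp (Continuous.prodMk_right μ)

theorem setIntegral_gaussianPDFReal_mono {μ : ℝ} {s t : Set ℝ} (hst : s ⊆ t) :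
    ∫ x in s, gaussianPDFReal μ v x ≤ ∫ x in t, gaussianPDFReal μ v x :=
  setIntegral_mono_set (integrable_gaussianPDFReal μ v).integrableOn
    (ae_of_all _ (gaussianPDFReal_nonneg μ v)) hst.eventuallyLE

theorem setIntegral_gaussianPDFReal_le_one (μ : ℝ) (hv : v ≠ 0) (s : Set ℝ) :
    ∫ x in s, gaussianPDFReal μ v x ≤ 1 :=
  (setIntegral_le_integral (integrable_gaussianPDFReal μ v)
    (ae_of_all _ (gaussianPDFReal_nonneg μ v))).trans_eq (integral_gaussianPDFReal_eq_one μ hv)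

theorem setIntegral_Iic_gaussianPDFReal_self_eq_Ici (μ : ℝ) (v : ℝ≥0) :
    ∫ x in Iic μ, gaussianPDFReal μ v x = ∫ x in Ici μ, gaussianPDFReal μ v x := by
  have hpre : (fun x => 2 * μ - x) ⁻¹' Iic μ = Ici μ := by
    ext x; simp only [mem_preimage, mem_Iic, mem_Ici]; constructor <;> intro <;> linarith
  have hrefl : ∀ x, gaussianPDFReal μ v (2 * μ - x) = gaussianPDFReal μ v x := fun x => by
    simp only [gaussianPDFReal, show 2 * μ - x - μ = -(x - μ) by ring, neg_sq]
  rw [← (Measure.measurePreserving_sub_left volume (2 * μ)).setIntegral_preimage_emb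
    (MeasurableEquiv.subLeft (2 * μ)).measurableEmbedding, hpre]
  simp only [hrefl]

theorem setIntegral_Ici_gaussianPDFReal_self (μ : ℝ) (hv : v ≠ 0) :
    ∫ x in Ici μ, gaussianPDFReal μ v x = 1 / 2 := by
  have h := integral_add_compl (measurableSet_Iic (a := μ)) (integrable_gaussianPDFReal μ v)
  rw [compl_Iic, ← integral_Ici_eq_integral_Ioi, setIntegral_Iic_gaussianPDFReal_self_eq_Ici,
    integral_gaussianPDFReal_eq_one μ hv] at h
  linarith

theorem setIntegral_Iic_gaussianPDFReal_self (μ : ℝ) (hv : v ≠ 0) :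
    ∫ x in Iic μ, gaussianPDFReal μ v x = 1 / 2 := by
  rw [setIntegral_Iic_gaussianPDFReal_self_eq_Ici, setIntegral_Ici_gaussianPDFReal_self μ hv]

theorem gaussianPDFReal_le_exp_mul_gaussianPDFReal {μ t x : ℝ} (h : 0 ≤ (t - μ) * (x - t)) :
    gaussianPDFReal μ v x ≤ rexp (-(t - μ) ^ 2 / (2 * v)) * gaussianPDFReal t v x := by
  simp only [gaussianPDFReal]
  rw [mul_left_comm, ← exp_add, ← add_div]
  gcongr
  have : (x - μ) ^ 2 = (t - μ) ^ 2 + (x - t) ^ 2 + 2 * ((t - μ) * (x - t)) := by ring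
  linarith

theorem setIntegral_Ici_gaussianPDFReal_le {μ t : ℝ} (hv : v ≠ 0) (ht : μ ≤ t) :
    ∫ x in Ici t, gaussianPDFReal μ v x ≤ rexp (-(t - μ) ^ 2 / (2 * v)) / 2 := by
  calc ∫ x in Ici t, gaussianPDFReal μ v x
      ≤ ∫ x in Ici t, rexp (-(t - μ) ^ 2 / (2 * v)) * gaussianPDFReal t v x :=
        setIntegral_mono_on (integrable_gaussianPDFReal μ v).integrableOn
          ((integrable_gaussianPDFReal t v).const_mul _).integrableOn measurableSet_Ici
          fun x hx => gaussianPDFReal_le_exp_mul_gaussianPDFReal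
            (mul_nonneg (sub_nonneg.2 ht) (sub_nonneg.2 hx))
    _ = rexp (-(t - μ) ^ 2 / (2 * v)) / 2 := by
        rw [integral_const_mul, setIntegral_Ici_gaussianPDFReal_self t hv, mul_one_div]

theorem setIntegral_Iic_gaussianPDFReal_le {μ s : ℝ} (hv : v ≠ 0) (hs : s ≤ μ) :
    ∫ x in Iic s, gaussianPDFReal μ v x ≤ rexp (-(s - μ) ^ 2 / (2 * v)) / 2 := by
  calc ∫ x in Iic s, gaussianPDFReal μ v x
      ≤ ∫ x in Iic s, rexp (-(s - μ) ^ 2 / (2 * v)) * gaussianPDFReal s v x :=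
        setIntegral_mono_on (integrable_gaussianPDFReal μ v).integrableOn
          ((integrable_gaussianPDFReal s v).const_mul _).integrableOn measurableSet_Iic
          fun x hx => gaussianPDFReal_le_exp_mul_gaussianPDFReal
            (mul_nonneg_of_nonpos_of_nonpos (sub_nonpos.2 hs) (sub_nonpos.2 hx))
    _ = rexp (-(s - μ) ^ 2 / (2 * v)) / 2 := by
        rw [integral_const_mul, setIntegral_Iic_gaussianPDFReal_self s hv, mul_one_div]

theorem setIntegral_gaussianPDFReal_le_of_subset {μ s t : ℝ} {S : Set ℝ} (hv : v ≠ 0)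
    (hs : s ≤ μ) (ht : μ ≤ t) (hS : S ⊆ Iic s ∪ Ici t) :
    ∫ x in S, gaussianPDFReal μ v x
      ≤ (rexp (-(s - μ) ^ 2 / (2 * v)) + rexp (-(t - μ) ^ 2 / (2 * v))) / 2 := by
  have hint := integrable_gaussianPDFReal μ v
  calc ∫ x in S, gaussianPDFReal μ v x ≤ ∫ x in Iic s ∪ Ici t, gaussianPDFReal μ v x :=
        setIntegral_gaussianPDFReal_mono hS
    _ ≤ (∫ x in Iic s, gaussianPDFReal μ v x) + ∫ x in Ici t, gaussianPDFReal μ v x :=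
        setIntegral_union_le (gaussianPDFReal_nonneg μ v) hint.integrableOn hint.integrableOn
    _ ≤ _ := by
        rw [add_div]
        exact add_le_add (setIntegral_Iic_gaussianPDFReal_le hv hs)
          (setIntegral_Ici_gaussianPDFReal_le hv ht)

theorem exp_neg_sq_div_eq_mul_gaussianPDFReal (hv : v ≠ 0) (μ x : ℝ) :
    rexp (-(μ - x) ^ 2 / (2 * v)) = √(2 * π * v) * gaussianPDFReal μ v x := by
  have : √(2 * π * v) ≠ 0 := by positivity
  rw [gaussianPDFReal, mul_inv_cancel_left₀ this, sub_sq_comm]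

section Smoothing

variable {g : ℝ → ℝ} {a b x d η M : ℝ}

theorem setIntegral_abs_sub_mul_gaussianPDFReal_le (hv : v ≠ 0) (hg : ContinuousOn g (Icc a b))
    (hgM : ∀ y ∈ Icc a b, |g y| ≤ M) (hx : x ∈ Icc a b) (hd : 0 ≤ d) (hη : 0 ≤ η)
    (hmod : ∀ y ∈ Icc a b, |y - x| < d → |g y - g x| ≤ η) :
    ∫ y in Icc a b, |g y - g x| * gaussianPDFReal x v y
      ≤ η + 2 * M * rexp (-d ^ 2 / (2 * v)) := by
  have hp := integrable_gaussianPDFReal x v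
  have hp0 := gaussianPDFReal_nonneg x v
  have hint : IntegrableOn (fun y => |g y - g x| * gaussianPDFReal x v y) (Icc a b) :=
    ((hg.sub continuousOn_const).abs.mul
      (continuous_gaussianPDFReal x v).continuousOn).integrableOn_Icc
  have hM : 0 ≤ M := (abs_nonneg _).trans (hgM x hx)
  have near :
      ∫ y in Icc a b ∩ Ioo (x - d) (x + d), |g y - g x| * gaussianPDFReal x v y ≤ η :=
    calc _ ≤ ∫ y in Icc a b ∩ Ioo (x - d) (x + d), η * gaussianPDFReal x v y :=
          setIntegral_mono_on (hint.mono_set inter_subset_left) (hp.const_mul η).integrableOn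
            (measurableSet_Icc.inter measurableSet_Ioo) fun y hy =>
              mul_le_mul_of_nonneg_right (hmod y hy.1 (abs_sub_lt_iff.2
                ⟨by linarith [hy.2.2], by linarith [hy.2.1]⟩)) (hp0 y)
      _ ≤ η * 1 := by
          rw [integral_const_mul]
          exact mul_le_mul_of_nonneg_left (setIntegral_gaussianPDFReal_le_one x hv _) hη
      _ = η := mul_one η
  have hfar_sub : Icc a b \ Ioo (x - d) (x + d) ⊆ Iic (x - d) ∪ Ici (x + d) := fun y hy => by
    rcases le_or_gt y (x - d) with h | h
    · exact Or.inl h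
    · exact Or.inr (le_of_not_gt fun h' => hy.2 ⟨h, h'⟩)
  have far : ∫ y in Icc a b \ Ioo (x - d) (x + d), |g y - g x| * gaussianPDFReal x v y
      ≤ 2 * M * rexp (-d ^ 2 / (2 * v)) :=
    calc _ ≤ ∫ y in Icc a b \ Ioo (x - d) (x + d), 2 * M * gaussianPDFReal x v y :=
          setIntegral_mono_on (hint.mono_set sdiff_subset) (hp.const_mul _).integrableOn
            (measurableSet_Icc.diff measurableSet_Ioo) fun y hy =>
              mul_le_mul_of_nonneg_right ((abs_sub _ _).trans
                (by linarith [hgM y hy.1, hgM x hx])) (hp0 y)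
      _ ≤ 2 * M * ((rexp (-(x - d - x) ^ 2 / (2 * v))
            + rexp (-(x + d - x) ^ 2 / (2 * v))) / 2) := by
          rw [integral_const_mul]
          gcongr
          exact setIntegral_gaussianPDFReal_le_of_subset hv (by linarith) (by linarith) hfar_sub
      _ = 2 * M * rexp (-d ^ 2 / (2 * v)) := by
          rw [show x - d - x = -d by ring, show x + d - x = d by ring, neg_sq]
          ring
  rw [← integral_inter_add_sdiff measurableSet_Ioo hint]
  exact add_le_add near far

theorem one_sub_setIntegral_Icc_gaussianPDFReal_le (hv : v ≠ 0) (hx : x ∈ Icc a b) :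
    1 - ∫ y in Icc a b, gaussianPDFReal x v y
      ≤ (rexp (-(a - x) ^ 2 / (2 * v)) + rexp (-(b - x) ^ 2 / (2 * v))) / 2 := by
  have h := integral_add_compl (measurableSet_Icc (a := a) (b := b))
    (integrable_gaussianPDFReal x v)
  rw [integral_gaussianPDFReal_eq_one x hv] at h
  rw [← h, add_sub_cancel_left]
  refine setIntegral_gaussianPDFReal_le_of_subset hv hx.1 hx.2 fun y hy => ?_
  rcases le_or_gt y a with h | h
  · exact Or.inl h
  · exact Or.inr (le_of_not_gt fun h' => hy ⟨h.le, h'.le⟩)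

theorem abs_setIntegral_mul_gaussianPDFReal_sub_le (hv : v ≠ 0) (hg : ContinuousOn g (Icc a b))
    (hgM : ∀ y ∈ Icc a b, |g y| ≤ M) (hx : x ∈ Icc a b) (hd : 0 ≤ d) (hη : 0 ≤ η)
    (hmod : ∀ y ∈ Icc a b, |y - x| < d → |g y - g x| ≤ η) :
    |(∫ y in Icc a b, g y * gaussianPDFReal x v y) - g x|
      ≤ η + 2 * M * rexp (-d ^ 2 / (2 * v))
        + M * ((rexp (-(a - x) ^ 2 / (2 * v)) + rexp (-(b - x) ^ 2 / (2 * v))) / 2) := by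
  set m := ∫ y in Icc a b, gaussianPDFReal x v y
  have hgp : IntegrableOn (fun y => g y * gaussianPDFReal x v y) (Icc a b) :=
    (hg.mul (continuous_gaussianPDFReal x v).continuousOn).integrableOn_Icc
  have hp : IntegrableOn (fun y => g x * gaussianPDFReal x v y) (Icc a b) :=
    ((integrable_gaussianPDFReal x v).const_mul _).integrableOn
  have hdecomp : (∫ y in Icc a b, g y * gaussianPDFReal x v y) - g x
      = (∫ y in Icc a b, (g y - g x) * gaussianPDFReal x v y) - g x * (1 - m) := by
    simp_rw [sub_mul]
    rw [integral_sub hgp hp, integral_const_mul]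
    ring
  have hm : 0 ≤ 1 - m := sub_nonneg.2 (setIntegral_gaussianPDFReal_le_one x hv _)
  have hM : 0 ≤ M := (abs_nonneg _).trans (hgM x hx)
  rw [hdecomp]
  calc _ ≤ |∫ y in Icc a b, (g y - g x) * gaussianPDFReal x v y| + |g x| * (1 - m) :=
        (abs_sub _ _).trans_eq (by rw [abs_mul, abs_of_nonneg hm])
    _ ≤ (∫ y in Icc a b, |g y - g x| * gaussianPDFReal x v y) + M * (1 - m) := by
        gcongr
        · refine (abs_integral_le_integral_abs).trans_eq ?_
          simp_rw [abs_mul, abs_of_nonneg (gaussianPDFReal_nonneg x v _)]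
        · exact hgM x hx
    _ ≤ _ := by
        gcongr
        · exact setIntegral_abs_sub_mul_gaussianPDFReal_le hv hg hgM hx hd hη hmod
        · exact one_sub_setIntegral_Icc_gaussianPDFReal_le hv hx

theorem setIntegral_Icc_exp_neg_sq_add_le (hv : v ≠ 0) :
    ∫ x in Icc a b, (rexp (-(a - x) ^ 2 / (2 * v)) + rexp (-(b - x) ^ 2 / (2 * v)))
      ≤ √(2 * π * v) := by
  simp_rw [exp_neg_sq_div_eq_mul_gaussianPDFReal hv, ← mul_add]
  rw [integral_const_mul]
  refine mul_le_of_le_one_right (by positivity) ?_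
  have hint := fun μ => (integrable_gaussianPDFReal μ v).integrableOn (s := Icc a b)
  have ha : ∫ x in Icc a b, gaussianPDFReal a v x ≤ 1 / 2 :=
    (setIntegral_gaussianPDFReal_mono Icc_subset_Ici_self).trans_eq
      (setIntegral_Ici_gaussianPDFReal_self a hv)
  have hb : ∫ x in Icc a b, gaussianPDFReal b v x ≤ 1 / 2 :=
    (setIntegral_gaussianPDFReal_mono Icc_subset_Iic_self).trans_eq
      (setIntegral_Iic_gaussianPDFReal_self b hv)
  rw [integral_add (hint a) (hint b)]
  linarith

theorem abs_integral_mul_gaussianPDFReal_sub_integral_diag_le {f : ℝ → ℝ → ℝ}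
    (hv : v ≠ 0) (hab : a ≤ b) (hf : ContinuousOn (fun p : ℝ × ℝ => f p.1 p.2) (Icc a b ×ˢ Icc a b))
    (hfM : ∀ x ∈ Icc a b, ∀ y ∈ Icc a b, |f x y| ≤ M) (hd : 0 ≤ d) (hη : 0 ≤ η)
    (hmod : ∀ x ∈ Icc a b, ∀ y ∈ Icc a b, |y - x| < d → |f x y - f x x| ≤ η) :
    |(∫ x in Icc a b, ∫ y in Icc a b, f x y * gaussianPDFReal x v y) - ∫ x in Icc a b, f x x|
      ≤ (b - a) * (η + 2 * M * rexp (-d ^ 2 / (2 * v))) + M / 2 * √(2 * π * v) := by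
  have hinner :
      IntegrableOn (fun x => ∫ y in Icc a b, f x y * gaussianPDFReal x v y) (Icc a b) :=
    integrableOn_setIntegral_of_continuousOn isCompact_Icc isCompact_Icc
      (hf.mul (continuous_uncurry_gaussianPDFReal v).continuousOn)
  have hdiag : IntegrableOn (fun x => f x x) (Icc a b) :=
    (hf.comp (continuous_id.prodMk continuous_id).continuousOn fun x hx => ⟨hx, hx⟩)
      |>.integrableOn_Icc
  have hfx : ∀ x ∈ Icc a b, ContinuousOn (f x) (Icc a b) := fun x hx =>
    hf.comp (Continuous.prodMk_right x).continuousOn fun y hy => ⟨hx, hy⟩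
  have hedge :
      IntegrableOn (fun x => rexp (-(a - x) ^ 2 / (2 * v)) + rexp (-(b - x) ^ 2 / (2 * v)))
        (Icc a b) := (Continuous.continuousOn (by fun_prop)).integrableOn_Icc
  calc _ = |∫ x in Icc a b, ((∫ y in Icc a b, f x y * gaussianPDFReal x v y) - f x x)| := by
        rw [integral_sub hinner hdiag]
    _ ≤ ∫ x in Icc a b, |(∫ y in Icc a b, f x y * gaussianPDFReal x v y) - f x x| :=
        abs_integral_le_integral_abs
    _ ≤ ∫ x in Icc a b, (η + 2 * M * rexp (-d ^ 2 / (2 * v))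
          + M * ((rexp (-(a - x) ^ 2 / (2 * v)) + rexp (-(b - x) ^ 2 / (2 * v))) / 2)) :=
        setIntegral_mono_on (hinner.sub hdiag).abs
          (Continuous.continuousOn (by fun_prop)).integrableOn_Icc measurableSet_Icc fun x hx =>
            abs_setIntegral_mul_gaussianPDFReal_sub_le hv (hfx x hx) (hfM x hx) hx hd hη
              (hmod x hx)
    _ = (b - a) * (η + 2 * M * rexp (-d ^ 2 / (2 * v))) + M / 2 *
          ∫ x in Icc a b, (rexp (-(a - x) ^ 2 / (2 * v)) + rexp (-(b - x) ^ 2 / (2 * v))) := by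
        rw [integral_add (integrable_const _) ((hedge.div_const 2).const_mul M),
          setIntegral_const, Real.volume_real_Icc_of_le hab, smul_eq_mul, integral_const_mul,
          integral_div]
        ring
    _ ≤ _ := by
        have hM : 0 ≤ M := (abs_nonneg _).trans (hfM a ⟨le_rfl, hab⟩ a ⟨le_rfl, hab⟩)
        gcongr
        exact setIntegral_Icc_exp_neg_sq_add_le hv

end Smoothing

end ProbabilityTheory

theorem exp_neg_sq_div_lt_inv_of_lt_div_sqrt_log {A d ℓ : ℝ} (hA : 0 < A) (hℓ : 0 < ℓ)
    (h : ℓ < d / √(2 * log A)) : rexp (-d ^ 2 / (2 * ℓ ^ 2)) < A⁻¹ := by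
  have hs : 0 < √(2 * log A) := by
    by_contra! hs
    rw [le_antisymm hs (sqrt_nonneg _), div_zero] at h
    linarith
  have hlog : 0 < 2 * log A := sqrt_pos.1 hs
  have hsq : ℓ ^ 2 * (2 * log A) < d ^ 2 := by
    have := pow_lt_pow_left₀ ((lt_div_iff₀ hs).1 h) (by positivity) two_ne_zero
    rwa [mul_pow, sq_sqrt hlog.le] at this
  rw [← exp_log (inv_pos.2 hA), log_inv, exp_lt_exp, neg_div, neg_lt_neg_iff,
    lt_div_iff₀ (by positivity)]
  linarith

/-- Bias bound for the continuous Hutchinson estimator (Theorem 4.1):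
with `K_ℓ` the normalized squared-exponential kernel and `ℓ` small enough,
`|E[H_m(f)] − tr(f)| = |∫∫ f·K_ℓ − ∫ f(x,x) dx| < ε`.
Here `M = ‖f‖_∞`, an upper bound for `|f|` on `Ω × Ω`. -/
theorem contHutch_expectation_bias
    (a b : ℝ) (hab : a < b) (f : ℝ → ℝ → ℝ)
    (hf : ContinuousOn (fun p : ℝ × ℝ => f p.1 p.2) (Set.Icc a b ×ˢ Set.Icc a b))
    (ε : ℝ) (hε : 0 < ε) (M : ℝ) (hM : 0 < M)
    (hMf : ∀ x ∈ Set.Icc a b, ∀ y ∈ Set.Icc a b, |f x y| ≤ M)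
    (d : ℝ) (hd : 0 < d)
    (hmod : ∀ x ∈ Set.Icc a b, ∀ y ∈ Set.Icc a b, ∀ z ∈ Set.Icc a b,
      |y - z| < d → |f x y - f x z| ≤ ε / (4 * (b - a)))
    (ℓ : ℝ) (hℓ : 0 < ℓ)
    (hℓlt : ℓ < min (d / Real.sqrt (2 * Real.log (8 * M * (b - a) / ε)))
      (5 * ε / (26 * M))) :
    |(∫ x in Set.Icc a b, ∫ y in Set.Icc a b,
        f x y * ((1 / (ℓ * Real.sqrt (2 * Real.pi))) *
          Real.exp (-(x - y) ^ 2 / (2 * ℓ ^ 2))))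
      - ∫ x in Set.Icc a b, f x x| < ε := by
  have hba : 0 < b - a := sub_pos.2 hab
  set v : ℝ≥0 := ⟨ℓ ^ 2, sq_nonneg ℓ⟩
  have hv_coe : (v : ℝ) = ℓ ^ 2 := rfl
  have hv : v ≠ 0 := NNReal.coe_ne_zero.1 (pow_pos hℓ 2).ne'
  have hsqrt : √(2 * π * v) = ℓ * √(2 * π) := by
    rw [hv_coe, mul_comm, sqrt_mul (sq_nonneg ℓ), sqrt_sq hℓ.le]
  have hK : ∀ x y, 1 / (ℓ * √(2 * π)) * rexp (-(x - y) ^ 2 / (2 * ℓ ^ 2))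
      = gaussianPDFReal x v y := fun x y => by
    rw [gaussianPDFReal, hsqrt, one_div, sub_sq_comm, hv_coe]
  simp only [hK]
  have hbias := abs_integral_mul_gaussianPDFReal_sub_integral_diag_le hv hab.le hf hMf hd.le
    (by positivity) fun x hx y hy => hmod x hx y hy x hx
  rw [hsqrt, hv_coe] at hbias
  have hfar : 2 * M * (b - a) * rexp (-d ^ 2 / (2 * ℓ ^ 2)) < ε / 4 := by
    have := exp_neg_sq_div_lt_inv_of_lt_div_sqrt_log (by positivity) hℓ
      (hℓlt.trans_le (min_le_left _ _))
    calc _ < 2 * M * (b - a) * (8 * M * (b - a) / ε)⁻¹ := by gcongr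
      _ = ε / 4 := by field_simp; ring
  have hedge : M / 2 * (ℓ * √(2 * π)) < ε / 4 := by
    have hsqrt2π : √(2 * π) < 13 / 5 := by
      rw [sqrt_lt' (by norm_num)]
      nlinarith [pi_lt_d2]
    calc _ < M / 2 * (5 * ε / (26 * M) * (13 / 5)) := by
          gcongr
          exact hℓlt.trans_le (min_le_right _ _)
      _ = ε / 4 := by field_simp; ring
  calc _ ≤ (b - a) * (ε / (4 * (b - a)) + 2 * M * rexp (-d ^ 2 / (2 * ℓ ^ 2)))
        + M / 2 * (ℓ * √(2 * π)) := hbias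
    _ = ε / 4 + 2 * M * (b - a) * rexp (-d ^ 2 / (2 * ℓ ^ 2)) + M / 2 * (ℓ * √(2 * π)) := by
        field_simp
    _ < ε := by linarith
end

section
/- Let Ω = [a,b], f : Ω×Ω → ℝ continuous and bounded, and K_ℓ the normalized Gaussian kernel with length scale ℓ. Then ∫_Ω |∫_{ℝ∖Ω} f(x,x) K_ℓ(x,y) dy| dx ≤ (13/5) ℓ ‖f‖_∞. In particular this boundary-leakage term tends to 0 as ℓ → 0. -/
/-!
Since `t² / (2ℓ²) ≥ t / ℓ - 1 / 2`, we have `e^{-t²/(2ℓ²)} ≤ e^{1/2} e^{-t/ℓ}`. Hence the mass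
of `K_ℓ(x, ·)` outside `[a, b]` is at most `e^{1/2} / √(2π) · (e^{-(x-a)/ℓ} + e^{-(b-x)/ℓ})`,
and integrating this over `x ∈ [a, b]` gives at most `2ℓ e^{1/2} / √(2π) ≤ (13/5) ℓ`.
-/

open MeasureTheory Real Set

lemma Set.compl_Icc {α : Type*} [LinearOrder α] (a b : α) : (Icc a b)ᶜ = Iio a ∪ Ioi b := by
  ext
  simp only [mem_compl_iff, mem_Icc, not_and_or, not_le, mem_union, mem_Iio, mem_Ioi]

lemma exp_neg_sq_div_le {ℓ : ℝ} (hℓ : 0 < ℓ) (t : ℝ) :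
    exp (-t ^ 2 / (2 * ℓ ^ 2)) ≤ exp (1 / 2) * exp (-(t / ℓ)) := by
  rw [← exp_add, exp_le_exp, div_add' _ _ _ (by positivity), div_le_iff₀ (by positivity)]
  nlinarith [sq_nonneg (t - ℓ), div_mul_cancel₀ t hℓ.ne']

lemma integral_Ioi_exp_neg_div {ℓ : ℝ} (hℓ : 0 < ℓ) (c : ℝ) :
    ∫ t in Ioi c, exp (-(t / ℓ)) = ℓ * exp (-(c / ℓ)) := by
  have := integral_comp_mul_left_Ioi (fun u => exp (-u)) c (inv_pos.mpr hℓ)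
  simp_all [integral_exp_Iic, div_eq_inv_mul]

lemma integrableOn_Ioi_exp_neg_div {ℓ : ℝ} (hℓ : 0 < ℓ) (c : ℝ) :
    IntegrableOn (fun t => exp (-(t / ℓ))) (Ioi c) := by
  simpa [div_eq_inv_mul] using exp_neg_integrableOn_Ioi c (inv_pos.mpr hℓ)

lemma integrable_exp_neg_sq_div {ℓ : ℝ} (hℓ : 0 < ℓ) :
    Integrable fun t : ℝ => exp (-t ^ 2 / (2 * ℓ ^ 2)) := by
  convert integrable_exp_neg_mul_sq (b := (2 * ℓ ^ 2)⁻¹) (by positivity) using 3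
  ring

lemma integral_Ioi_exp_neg_sq_div_le {ℓ : ℝ} (hℓ : 0 < ℓ) (c : ℝ) :
    ∫ t in Ioi c, exp (-t ^ 2 / (2 * ℓ ^ 2)) ≤ exp (1 / 2) * (ℓ * exp (-(c / ℓ))) := by
  rw [← integral_Ioi_exp_neg_div hℓ, ← integral_const_mul]
  exact setIntegral_mono (integrable_exp_neg_sq_div hℓ).integrableOn
    ((integrableOn_Ioi_exp_neg_div hℓ c).const_mul _) (exp_neg_sq_div_le hℓ)

section Translation

variable {E : Type*} [NormedAddCommGroup E] [NormedSpace ℝ E]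

lemma setIntegral_comp_sub_right (g : ℝ → E) (x : ℝ) (s : Set ℝ) :
    ∫ y in s, g (y - x) = ∫ t in (· - x) '' s, g t :=
  ((measurePreserving_sub_right volume x).setIntegral_image_emb
    (measurableEmbedding_subRight x) g s).symm

lemma setIntegral_comp_sub_left (g : ℝ → E) (x : ℝ) (s : Set ℝ) :
    ∫ y in s, g (x - y) = ∫ t in (x - ·) '' s, g t :=
  ((Measure.measurePreserving_sub_left volume x).setIntegral_image_emb
    (measurableEmbedding_subLeft x) g s).symm

end Translation

lemma integral_Icc_exp_neg_div_le {ℓ : ℝ} (hℓ : 0 < ℓ) (c : ℝ) :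
    ∫ t in Icc 0 c, exp (-(t / ℓ)) ≤ ℓ :=
  calc ∫ t in Icc 0 c, exp (-(t / ℓ)) ≤ ∫ t in Ioi 0, exp (-(t / ℓ)) :=
        setIntegral_mono_set (integrableOn_Ioi_exp_neg_div hℓ 0)
          (ae_of_all _ fun _ => (exp_pos _).le)
          (Icc_subset_Ici_self.eventuallyLE.trans Ioi_ae_eq_Ici.symm.le)
    _ = ℓ := by simp [integral_Ioi_exp_neg_div hℓ]

lemma integral_compl_Icc_exp_neg_sq_div_le {ℓ : ℝ} (hℓ : 0 < ℓ) {a b : ℝ} (hab : a ≤ b)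
    (x : ℝ) :
    ∫ y in (Icc a b)ᶜ, exp (-(x - y) ^ 2 / (2 * ℓ ^ 2))
      ≤ exp (1 / 2) * (ℓ * (exp (-((x - a) / ℓ)) + exp (-((b - x) / ℓ)))) := by
  set g : ℝ → ℝ := fun t => exp (-t ^ 2 / (2 * ℓ ^ 2))
  have hg : Integrable fun y => g (x - y) := (integrable_exp_neg_sq_div hℓ).comp_sub_left x
  have hleft : ∫ y in Iio a, g (x - y) ≤ exp (1 / 2) * (ℓ * exp (-((x - a) / ℓ))) := by
    simpa [setIntegral_comp_sub_left] using integral_Ioi_exp_neg_sq_div_le hℓ (x - a)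
  have hright : ∫ y in Ioi b, g (x - y) ≤ exp (1 / 2) * (ℓ * exp (-((b - x) / ℓ))) := by
    have hsymm : ∀ y, g (x - y) = g (y - x) := fun y => by simp only [g, sub_sq_comm x]
    simpa [hsymm, setIntegral_comp_sub_right g] using integral_Ioi_exp_neg_sq_div_le hℓ (b - x)
  rw [compl_Icc, setIntegral_union (Iio_disjoint_Ioi_of_le hab) measurableSet_Ioi
    hg.integrableOn hg.integrableOn]
  linarith

lemma integral_Icc_exp_neg_dist_endpoints_le {ℓ : ℝ} (hℓ : 0 < ℓ) (a b : ℝ) :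
    ∫ x in Icc a b, (exp (-((x - a) / ℓ)) + exp (-((b - x) / ℓ))) ≤ 2 * ℓ := by
  have hleft : ∫ x in Icc a b, exp (-((x - a) / ℓ)) ≤ ℓ := by
    simpa [setIntegral_comp_sub_right (fun t => exp (-(t / ℓ)))]
      using integral_Icc_exp_neg_div_le hℓ (b - a)
  have hright : ∫ x in Icc a b, exp (-((b - x) / ℓ)) ≤ ℓ := by
    simpa [setIntegral_comp_sub_left (fun t => exp (-(t / ℓ)))]
      using integral_Icc_exp_neg_div_le hℓ (b - a)
  rw [integral_add (by fun_prop : Continuous _).integrableOn_Icc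
    (by fun_prop : Continuous _).integrableOn_Icc]
  linarith

lemma abs_integral_compl_Icc_mul_gaussian_le {ℓ : ℝ} (hℓ : 0 < ℓ) {a b : ℝ} (hab : a ≤ b)
    {m M : ℝ} (hm : |m| ≤ M) (x : ℝ) :
    |∫ y in (Icc a b)ᶜ, m * ((1 / (ℓ * √(2 * π))) * exp (-(x - y) ^ 2 / (2 * ℓ ^ 2)))|
      ≤ exp (1 / 2) / √(2 * π) * M * (exp (-((x - a) / ℓ)) + exp (-((b - x) / ℓ))) := by
  have hM : 0 ≤ M := (abs_nonneg m).trans hm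
  have hI : 0 ≤ ∫ y in (Icc a b)ᶜ, exp (-(x - y) ^ 2 / (2 * ℓ ^ 2)) :=
    setIntegral_nonneg measurableSet_Icc.compl fun _ _ => (exp_pos _).le
  rw [integral_const_mul, integral_const_mul, abs_mul,
    abs_of_nonneg (mul_nonneg (by positivity) hI)]
  calc |m| * (1 / (ℓ * √(2 * π)) * ∫ y in (Icc a b)ᶜ, exp (-(x - y) ^ 2 / (2 * ℓ ^ 2)))
      ≤ M * (1 / (ℓ * √(2 * π)) *
          (exp (1 / 2) * (ℓ * (exp (-((x - a) / ℓ)) + exp (-((b - x) / ℓ)))))) := by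
        gcongr
        exact integral_compl_Icc_exp_neg_sq_div_le hℓ hab x
    _ = exp (1 / 2) / √(2 * π) * M * (exp (-((x - a) / ℓ)) + exp (-((b - x) / ℓ))) := by
        field_simp

lemma exp_half_mul_two_le : exp (1 / 2) * 2 ≤ 13 / 5 * √(2 * π) := by
  have h1 : exp (1 / 2) ≤ 2 := by
    rw [exp_half, sqrt_le_iff]
    constructor <;> nlinarith [exp_one_lt_d9]
  have h2 : 2 ≤ √(2 * π) := le_sqrt_of_sq_le (by nlinarith [pi_gt_three])
  nlinarith

theorem boundary_leakage_le_general
    (a b : ℝ) (hab : a < b) (f : ℝ → ℝ → ℝ)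
    (M : ℝ) (hMf : ∀ x ∈ Set.Icc a b, ∀ y ∈ Set.Icc a b, |f x y| ≤ M)
    (ℓ : ℝ) (hℓ : 0 < ℓ) :
    (∫ x in Set.Icc a b,
        |∫ y in (Set.Icc a b)ᶜ, f x x * ((1 / (ℓ * Real.sqrt (2 * Real.pi))) *
          Real.exp (-(x - y) ^ 2 / (2 * ℓ ^ 2)))|)
      ≤ (13 / 5) * ℓ * M := by
  have hM : 0 ≤ M := (abs_nonneg _).trans (hMf a ⟨le_rfl, hab.le⟩ a ⟨le_rfl, hab.le⟩)
  calc _ ≤ ∫ x in Icc a b,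
          exp (1 / 2) / √(2 * π) * M * (exp (-((x - a) / ℓ)) + exp (-((b - x) / ℓ))) :=
        integral_mono_of_nonneg (ae_of_all _ fun _ => abs_nonneg _)
          (by fun_prop : Continuous _).integrableOn_Icc
          ((ae_restrict_mem measurableSet_Icc).mono fun x hx =>
            abs_integral_compl_Icc_mul_gaussian_le hℓ hab.le (hMf x hx x hx) x)
    _ ≤ exp (1 / 2) / √(2 * π) * M * (2 * ℓ) := by
        rw [integral_const_mul]
        gcongr
        exact integral_Icc_exp_neg_dist_endpoints_le hℓ a b
    _ ≤ 13 / 5 * ℓ * M := by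
        rw [div_mul_eq_mul_div, div_mul_eq_mul_div, div_le_iff₀ (by positivity)]
        nlinarith [exp_half_mul_two_le, mul_nonneg hℓ.le hM]

/-- Boundary-leakage bound: for `Ω = [a,b]` and the normalized Gaussian kernel
`K_ℓ`, `∫_Ω |∫_{ℝ∖Ω} f(x,x) K_ℓ(x,y) dy| dx ≤ (13/5) ℓ ‖f‖_∞`. -/
theorem boundary_leakage_le
    (a b : ℝ) (hab : a < b) (f : ℝ → ℝ → ℝ)
    (hf : ContinuousOn (fun p : ℝ × ℝ => f p.1 p.2) (Set.Icc a b ×ˢ Set.Icc a b))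
    (M : ℝ) (hMf : ∀ x ∈ Set.Icc a b, ∀ y ∈ Set.Icc a b, |f x y| ≤ M)
    (ℓ : ℝ) (hℓ : 0 < ℓ) :
    (∫ x in Set.Icc a b,
        |∫ y in (Set.Icc a b)ᶜ, f x x * ((1 / (ℓ * Real.sqrt (2 * Real.pi))) *
          Real.exp (-(x - y) ^ 2 / (2 * ℓ ^ 2)))|)
      ≤ (13 / 5) * ℓ * M :=
  boundary_leakage_le_general a b hab f M hMf ℓ hℓ
end

section
/- Let f : Ω×Ω → ℝ be a continuous symmetric kernel with associated integral operator F, let K be a continuous symmetric positive semidefinite covariance kernel with operator K_op, and let g ∼ GP(0,K). Define h(g) = ‖2∫_Ω f(·,y)g(y)dy‖_{L²}. Then E[h(g)²] = 4 tr(K F²) ≤ 4 ‖f‖²_{L²} ‖K‖_op, and consequently E[h(g)] ≤ 2 ‖f‖_{L²} ‖K‖_op^{1/2}. -/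
/-!
Expanding the square and applying Fubini,
`E ∫ₓ (∫_y f(x,y) g(y))² = ∫∫∫ f(x,y) f(x,z) E[g(y) g(z)]`, and `E[g(y) g(z)] = K(y,z)` turns
this into `tr(K F²)`. Integrating over `y, z` first for fixed `x`, the integrand becomes
`⟪f(x,·), T_K f(x,·)⟫ ≤ ‖T_K‖ ‖f(x,·)‖²`, which integrates to `‖T_K‖ ‖f‖²`. The bound on
`E[h(g)]` follows from Jensen's inequality for the concave `√`.
-/

open MeasureTheory
open scoped RealInnerProductSpace

section TripleProduct

variable {α : Type*} [MeasurableSpace α] {ν : Measure α} [SFinite ν]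

theorem integral_prod_prod_eq_integral_middle_outer {Φ : α × α × α → ℝ}
    (hΦ : Integrable Φ (ν.prod (ν.prod ν))) :
    ∫ q, Φ q ∂ν.prod (ν.prod ν) = ∫ x, ∫ z, ∫ y, Φ (y, x, z) ∂ν ∂ν ∂ν := by
  rw [integral_prod_symm _ hΦ, integral_prod _ hΦ.integral_prod_right]

theorem integral_prod_prod_eq_integral_first_outer {Φ : α × α × α → ℝ}
    (hΦ : Integrable Φ (ν.prod (ν.prod ν))) :
    ∫ q, Φ q ∂ν.prod (ν.prod ν) = ∫ y, ∫ z, ∫ x, Φ (y, x, z) ∂ν ∂ν ∂ν := by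
  rw [integral_prod _ hΦ]
  refine integral_congr_ae ?_
  filter_upwards [hΦ.prod_right_ae] with y hy
  exact integral_prod_symm _ hy

theorem integral_sq_integral_eq_integral_prod_prod {h : α → α → ℝ}
    (hh : Integrable (fun q : α × α × α => h q.2.1 q.1 * h q.2.1 q.2.2)
      (ν.prod (ν.prod ν))) :
    ∫ x, (∫ y, h x y ∂ν) ^ 2 ∂ν
      = ∫ q, h q.2.1 q.1 * h q.2.1 q.2.2 ∂ν.prod (ν.prod ν) := by
  simp_rw [integral_prod_prod_eq_integral_middle_outer hh, integral_mul_const,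
    integral_const_mul, sq]

theorem integral_prod_prod_eq_trace (f K : α → α → ℝ)
    (hP : Integrable (fun q : α × α × α => f q.2.1 q.1 * f q.2.1 q.2.2 * K q.1 q.2.2)
      (ν.prod (ν.prod ν))) :
    ∫ q, f q.2.1 q.1 * f q.2.1 q.2.2 * K q.1 q.2.2 ∂ν.prod (ν.prod ν)
      = ∫ y, ∫ z, K y z * ∫ x, f x z * f x y ∂ν ∂ν ∂ν := by
  simp_rw [integral_prod_prod_eq_integral_first_outer hP, ← integral_const_mul]
  congr 1 with y
  congr 1 with z
  congr 1 with x
  ring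

end TripleProduct

section SecondMoment

variable {α W : Type*} [MeasurableSpace W] {μ : Measure W} {K : α → α → ℝ} {g : W → α → ℝ}

theorem integral_const_mul_mul_eq_of_covariance
    (hcov : ∀ x y, ∫ ω, g ω x * g ω y ∂μ = K x y) (c : ℝ) (y z : α) :
    ∫ ω, c * g ω y * g ω z ∂μ = c * K y z := by
  simp_rw [mul_assoc, integral_const_mul, hcov]

variable [MeasurableSpace α] {ν : Measure α} [SFinite ν] [SFinite μ] {f : α → α → ℝ}
  (hint : Integrable
    (fun p : W × α × α × α =>
      f p.2.2.1 p.2.1 * f p.2.2.1 p.2.2.2 * g p.1 p.2.1 * g p.1 p.2.2.2)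
    (μ.prod (ν.prod (ν.prod ν))))
include hint

theorem integral_sq_integral_ae_eq :
    ∀ᵐ ω ∂μ, ∫ x, (∫ y, f x y * g ω y ∂ν) ^ 2 ∂ν
      = ∫ q, f q.2.1 q.1 * f q.2.1 q.2.2 * g ω q.1 * g ω q.2.2 ∂ν.prod (ν.prod ν) := by
  filter_upwards [hint.prod_right_ae] with ω hω
  have hfactor : (fun q : α × α × α => f q.2.1 q.1 * f q.2.1 q.2.2 * g ω q.1 * g ω q.2.2)
      = fun q => f q.2.1 q.1 * g ω q.1 * (f q.2.1 q.2.2 * g ω q.2.2) := by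
    ext q; ring
  rw [hfactor] at hω ⊢
  exact integral_sq_integral_eq_integral_prod_prod hω

theorem integrable_integral_sq_integral :
    Integrable (fun ω => ∫ x, (∫ y, f x y * g ω y ∂ν) ^ 2 ∂ν) μ :=
  hint.integral_prod_left.congr ((integral_sq_integral_ae_eq hint).mono fun _ h => h.symm)

variable (hcov : ∀ x y, ∫ ω, g ω x * g ω y ∂μ = K x y)
include hcov

theorem integrable_kernel_of_covariance :
    Integrable (fun q : α × α × α => f q.2.1 q.1 * f q.2.1 q.2.2 * K q.1 q.2.2)
      (ν.prod (ν.prod ν)) := by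
  simpa only [integral_const_mul_mul_eq_of_covariance hcov] using hint.integral_prod_right

theorem integral_integral_sq_integral_eq :
    ∫ ω, ∫ x, (∫ y, f x y * g ω y ∂ν) ^ 2 ∂ν ∂μ
      = ∫ q, f q.2.1 q.1 * f q.2.1 q.2.2 * K q.1 q.2.2 ∂ν.prod (ν.prod ν) := by
  rw [integral_congr_ae (integral_sq_integral_ae_eq hint), integral_integral_swap hint]
  simp_rw [integral_const_mul_mul_eq_of_covariance hcov]

end SecondMoment

section KernelOperator

variable {α : Type*} [MeasurableSpace α] {ν : Measure α} {K : α → α → ℝ}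

theorem integral_mul_integral_kernel_le (T : Lp ℝ 2 ν →L[ℝ] Lp ℝ 2 ν)
    (hT : ∀ u : Lp ℝ 2 ν, T u =ᵐ[ν] fun x => ∫ y, K x y * u y ∂ν) {φ : α → ℝ}
    (hφ : MemLp φ 2 ν) :
    ∫ x, φ x * ∫ y, K x y * φ y ∂ν ∂ν ≤ ‖T‖ * ∫ x, φ x ^ 2 ∂ν := by
  set u := hφ.toLp φ
  have hu : u =ᵐ[ν] φ := hφ.coeFn_toLp
  have hTu : T u =ᵐ[ν] fun x => ∫ y, K x y * φ y ∂ν := by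
    filter_upwards [hT u] with x hx
    rw [hx]
    exact integral_congr_ae (hu.mono fun y hy => by simp only [hy])
  have hinner : ∫ x, φ x * ∫ y, K x y * φ y ∂ν ∂ν = ⟪u, T u⟫ := by
    rw [L2.inner_def]
    refine integral_congr_ae ?_
    filter_upwards [hu, hTu] with x hux hTux
    rw [hux, hTux, RCLike.inner_apply, conj_trivial, mul_comm]
  have hnorm : ∫ x, φ x ^ 2 ∂ν = ‖u‖ ^ 2 := by
    rw [← real_inner_self_eq_norm_sq, L2.inner_def]
    refine integral_congr_ae ?_
    filter_upwards [hu] with x hux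
    rw [hux, real_inner_self_eq_norm_sq, Real.norm_eq_abs, sq_abs]
  calc ∫ x, φ x * ∫ y, K x y * φ y ∂ν ∂ν = ⟪u, T u⟫ := hinner
    _ ≤ ‖u‖ * (‖T‖ * ‖u‖) :=
      (real_inner_le_norm u (T u)).trans
        (mul_le_mul_of_nonneg_left (T.le_opNorm u) (norm_nonneg u))
    _ = ‖T‖ * ∫ x, φ x ^ 2 ∂ν := by rw [hnorm]; ring

theorem integral_prod_prod_kernel_le [SFinite ν] (T : Lp ℝ 2 ν →L[ℝ] Lp ℝ 2 ν)
    (hT : ∀ u : Lp ℝ 2 ν, T u =ᵐ[ν] fun x => ∫ y, K x y * u y ∂ν) (hK : ∀ x y, K x y = K y x)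
    {f : α → α → ℝ}
    (hP : Integrable (fun q : α × α × α => f q.2.1 q.1 * f q.2.1 q.2.2 * K q.1 q.2.2)
      (ν.prod (ν.prod ν)))
    (hf : ∀ᵐ x ∂ν, MemLp (f x) 2 ν) (hf2 : Integrable (fun x => ∫ y, f x y ^ 2 ∂ν) ν) :
    ∫ q, f q.2.1 q.1 * f q.2.1 q.2.2 * K q.1 q.2.2 ∂ν.prod (ν.prod ν)
      ≤ ‖T‖ * ∫ x, ∫ y, f x y ^ 2 ∂ν ∂ν := by
  rw [integral_prod_prod_eq_integral_middle_outer hP, ← integral_const_mul]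
  refine integral_mono_ae hP.integral_prod_right.integral_prod_left (hf2.const_mul _) ?_
  filter_upwards [hf] with x hx
  refine le_of_eq_of_le ?_ (integral_mul_integral_kernel_le T hT hx)
  congr 1 with z
  rw [← integral_const_mul]
  congr 1 with y
  rw [hK]
  ring

end KernelOperator

theorem integral_sqrt_le_sqrt_integral {W : Type*} [MeasurableSpace W] {μ : Measure W}
    [IsProbabilityMeasure μ] {X : W → ℝ} (hX0 : ∀ᵐ ω ∂μ, 0 ≤ X ω) (hX : Integrable X μ) :
    ∫ ω, √(X ω) ∂μ ≤ √(∫ ω, X ω ∂μ) := by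
  have hsqrt : MemLp (fun ω => √(X ω)) 2 μ := by
    refine (memLp_two_iff_integrable_sq
      (Real.continuous_sqrt.comp_aestronglyMeasurable hX.aestronglyMeasurable)).2 (hX.congr ?_)
    filter_upwards [hX0] with ω hω
    exact (Real.sq_sqrt hω).symm
  exact Real.strictConcaveOn_sqrt.concaveOn.le_map_integral Real.continuous_sqrt.continuousOn
    isClosed_Ici hX0 hX (hsqrt.integrable one_le_two)

theorem ContinuousOn.memLp_two_of_isCompact {X : Type*} [TopologicalSpace X] [T2Space X]
    [MeasurableSpace X] [OpensMeasurableSpace X] {μ : Measure X} [IsFiniteMeasureOnCompacts μ]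
    {s : Set X} {φ : X → ℝ} (hφ : ContinuousOn φ s) (hs : IsCompact s) :
    MemLp φ 2 (μ.restrict s) :=
  (memLp_two_iff_integrable_sq (hφ.aestronglyMeasurable hs.measurableSet)).2
    ((hφ.pow 2).integrableOn_compact hs)

theorem expectation_h_bound_general
    {W : Type*} [MeasurableSpace W] (μ : Measure W) [IsProbabilityMeasure μ]
    (a b : ℝ) (f K : ℝ → ℝ → ℝ)
    (hfc : ContinuousOn (fun p : ℝ × ℝ => f p.1 p.2) (Set.Icc a b ×ˢ Set.Icc a b))
    (hKsymm : ∀ x y, K x y = K y x)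
    (g : W → ℝ → ℝ)
    (hcov : ∀ x y, ∫ ω, g ω x * g ω y ∂μ = K x y)
    (hint : Integrable
      (fun p : W × ℝ × ℝ × ℝ =>
        f p.2.2.1 p.2.1 * f p.2.2.1 p.2.2.2 * g p.1 p.2.1 * g p.1 p.2.2.2)
      (μ.prod ((volume.restrict (Set.Icc a b)).prod
        ((volume.restrict (Set.Icc a b)).prod (volume.restrict (Set.Icc a b))))))
    (TK : Lp ℝ 2 (volume.restrict (Set.Icc a b)) →L[ℝ]
      Lp ℝ 2 (volume.restrict (Set.Icc a b)))
    (hTK : ∀ u : Lp ℝ 2 (volume.restrict (Set.Icc a b)),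
      (TK u : ℝ → ℝ) =ᵐ[volume.restrict (Set.Icc a b)]
        fun x => ∫ y in Set.Icc a b, K x y * u y) :
    (∫ ω, (∫ x in Set.Icc a b,
        (2 * ∫ y in Set.Icc a b, f x y * g ω y) ^ 2) ∂μ)
      = 4 * ∫ y in Set.Icc a b, ∫ z in Set.Icc a b,
          K y z * ∫ x in Set.Icc a b, f x z * f x y ∧
    (4 * ∫ y in Set.Icc a b, ∫ z in Set.Icc a b,
          K y z * ∫ x in Set.Icc a b, f x z * f x y)
      ≤ 4 * (∫ x in Set.Icc a b, ∫ y in Set.Icc a b, (f x y) ^ 2) * ‖TK‖ ∧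
    (∫ ω, Real.sqrt (∫ x in Set.Icc a b,
        (2 * ∫ y in Set.Icc a b, f x y * g ω y) ^ 2) ∂μ)
      ≤ 2 * Real.sqrt (∫ x in Set.Icc a b, ∫ y in Set.Icc a b, (f x y) ^ 2)
          * Real.sqrt ‖TK‖ := by
  have hP := integrable_kernel_of_covariance hint hcov
  have htrace := integral_prod_prod_eq_trace f K hP
  have hsq : ∀ ω, ∫ x in Set.Icc a b, (2 * ∫ y in Set.Icc a b, f x y * g ω y) ^ 2
      = 4 * ∫ x in Set.Icc a b, (∫ y in Set.Icc a b, f x y * g ω y) ^ 2 := fun ω => by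
    simp_rw [mul_pow, integral_const_mul]; norm_num
  have hf2 : Integrable (fun p : ℝ × ℝ => f p.1 p.2 ^ 2)
      ((volume.restrict (Set.Icc a b)).prod (volume.restrict (Set.Icc a b))) := by
    rw [Measure.prod_restrict, ← Measure.volume_eq_prod]
    exact (hfc.pow 2).integrableOn_compact (isCompact_Icc.prod isCompact_Icc)
  have hf : ∀ᵐ x ∂volume.restrict (Set.Icc a b), MemLp (f x) 2 (volume.restrict (Set.Icc a b)) := by
    filter_upwards [ae_restrict_mem measurableSet_Icc] with x hx
    exact (hfc.comp (Continuous.prodMk_right x).continuousOn fun y hy => ⟨hx, hy⟩)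
      |>.memLp_two_of_isCompact isCompact_Icc
  have hmoment : (∫ ω, (∫ x in Set.Icc a b,
      (2 * ∫ y in Set.Icc a b, f x y * g ω y) ^ 2) ∂μ)
      = 4 * ∫ y in Set.Icc a b, ∫ z in Set.Icc a b, K y z * ∫ x in Set.Icc a b, f x z * f x y := by
    simp_rw [hsq, integral_const_mul, integral_integral_sq_integral_eq hint hcov, htrace]
  have hbound := integral_prod_prod_kernel_le TK hTK hKsymm hP hf hf2.integral_prod_left
  refine ⟨hmoment, by rw [← htrace]; linarith, ?_⟩
  calc (∫ ω, √(∫ x in Set.Icc a b, (2 * ∫ y in Set.Icc a b, f x y * g ω y) ^ 2) ∂μ)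
      ≤ √(∫ ω, (∫ x in Set.Icc a b, (2 * ∫ y in Set.Icc a b, f x y * g ω y) ^ 2) ∂μ) :=
        integral_sqrt_le_sqrt_integral (ae_of_all _ fun ω => integral_nonneg fun x => sq_nonneg _)
          (((integrable_integral_sq_integral hint).const_mul 4).congr
            (ae_of_all _ fun ω => (hsq ω).symm))
    _ ≤ √(4 * (∫ x in Set.Icc a b, ∫ y in Set.Icc a b, f x y ^ 2) * ‖TK‖) := by
        gcongr; rw [hmoment, ← htrace]; linarith
    _ = 2 * √(∫ x in Set.Icc a b, ∫ y in Set.Icc a b, f x y ^ 2) * √‖TK‖ := by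
        rw [Real.sqrt_mul' _ (norm_nonneg TK), Real.sqrt_mul' _ (integral_nonneg fun x =>
          integral_nonneg fun y => sq_nonneg _), show (4 : ℝ) = 2 ^ 2 by norm_num,
          Real.sqrt_sq zero_le_two]

/-- Second-moment bound for `h(g) = ‖2∫_Ω f(·,y) g(y) dy‖_{L²}` where
`g ∼ GP(0,K)`: `E[h(g)²] = 4 tr(K F²) ≤ 4 ‖f‖²_{L²} ‖K‖_op` and hence
`E[h(g)] ≤ 2 ‖f‖_{L²} ‖K‖_op^{1/2}`. Here
`tr(K F²) = ∫∫ K(y,z) (∫ f(x,z) f(x,y) dx) dz dy`, `‖f‖²_{L²} = ∫∫ f²`, and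
`‖K‖_op` is the operator norm of the integral operator `TK` with kernel `K`. -/
theorem expectation_h_bound
    {W : Type*} [MeasurableSpace W] (μ : Measure W) [IsProbabilityMeasure μ]
    (a b : ℝ) (hab : a < b) (f K : ℝ → ℝ → ℝ)
    (hfc : ContinuousOn (fun p : ℝ × ℝ => f p.1 p.2) (Set.Icc a b ×ˢ Set.Icc a b))
    (hfsymm : ∀ x y, f x y = f y x)
    (hKc : Continuous fun p : ℝ × ℝ => K p.1 p.2)
    (hKsymm : ∀ x y, K x y = K y x)
    (hKpsd : ∀ (n : ℕ) (xs : Fin n → ℝ) (c : Fin n → ℝ),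
      0 ≤ ∑ i, ∑ j, c i * K (xs i) (xs j) * c j)
    (g : W → ℝ → ℝ)
    (hmean : ∀ x, ∫ ω, g ω x ∂μ = 0)
    (hcov : ∀ x y, ∫ ω, g ω x * g ω y ∂μ = K x y)
    (hint : Integrable
      (fun p : W × ℝ × ℝ × ℝ =>
        f p.2.2.1 p.2.1 * f p.2.2.1 p.2.2.2 * g p.1 p.2.1 * g p.1 p.2.2.2)
      (μ.prod ((volume.restrict (Set.Icc a b)).prod
        ((volume.restrict (Set.Icc a b)).prod (volume.restrict (Set.Icc a b))))))
    (TK : Lp ℝ 2 (volume.restrict (Set.Icc a b)) →L[ℝ]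
      Lp ℝ 2 (volume.restrict (Set.Icc a b)))
    (hTK : ∀ u : Lp ℝ 2 (volume.restrict (Set.Icc a b)),
      (TK u : ℝ → ℝ) =ᵐ[volume.restrict (Set.Icc a b)]
        fun x => ∫ y in Set.Icc a b, K x y * u y) :
    (∫ ω, (∫ x in Set.Icc a b,
        (2 * ∫ y in Set.Icc a b, f x y * g ω y) ^ 2) ∂μ)
      = 4 * ∫ y in Set.Icc a b, ∫ z in Set.Icc a b,
          K y z * ∫ x in Set.Icc a b, f x z * f x y ∧
    (4 * ∫ y in Set.Icc a b, ∫ z in Set.Icc a b,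
          K y z * ∫ x in Set.Icc a b, f x z * f x y)
      ≤ 4 * (∫ x in Set.Icc a b, ∫ y in Set.Icc a b, (f x y) ^ 2) * ‖TK‖ ∧
    (∫ ω, Real.sqrt (∫ x in Set.Icc a b,
        (2 * ∫ y in Set.Icc a b, f x y * g ω y) ^ 2) ∂μ)
      ≤ 2 * Real.sqrt (∫ x in Set.Icc a b, ∫ y in Set.Icc a b, (f x y) ^ 2)
          * Real.sqrt ‖TK‖ :=
  expectation_h_bound_general μ a b f K hfc hKsymm g hcov hint TK hTK
end
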